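/- For every integer K ≥ 3, the one-relator presentation P_K = ⟨a, b, t | w_K⟩, where w_K = t a^K t⁻¹ b^{K+4}, satisfies the C(6) small-cancellation condition: no element of the symmetrised closure of {w_K} is a concatenation (without cancellation) of fewer than 6 pieces. -/

import Mathlib

open FreeGroup

namespace CL

/-- A word over the alphabet `Fin n` with formal inverses. -/
abbrev Word (n : ℕ) := List (Fin n × Bool)

/-- The formal inverse of a word. -/
def wordInv {n : ℕ} (w : Word n) : Word n := (w.map fun x => (x.1, !x.2)).reverse

/-- A word is reduced if it has no adjacent cancelling pair. -/
def Reduced {n : ℕ} (w : Word n) : Prop :=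
  List.Chain' (fun a b => ¬(a.1 = b.1 ∧ a.2 = !b.2)) w

/-- A word is cyclically reduced if all of its cyclic permutations are reduced. -/
def CyclicallyReduced {n : ℕ} (w : Word n) : Prop := ∀ m : ℕ, Reduced (w.rotate m)

/-- `rel` is a (symmetrised-closure-ready) presentation: the relators are nontrivial,
cyclically reduced, and no relator is a cyclic permutation of another or of the
inverse of another. -/
def IsPres {n k : ℕ} (rel : Fin k → Word n) : Prop :=
  (∀ i, rel i ≠ []) ∧ (∀ i, CyclicallyReduced (rel i)) ∧
  (∀ i j : Fin k, i ≠ j → ∀ m : ℕ,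
     rel i ≠ (rel j).rotate m ∧ rel i ≠ (wordInv (rel j)).rotate m)

/-- The symmetrised closure: all cyclic permutations of the relators and of their
inverses. -/
def symClosure {n k : ℕ} (rel : Fin k → Word n) : Set (Word n) :=
  {w | ∃ (i : Fin k) (m : ℕ),
    w = (rel i).rotate m ∨ w = (wordInv (rel i)).rotate m}

/-- A piece: a nonempty reduced word which is an initial segment of two distinct
elements of the symmetrised closure. -/
def IsPiece {n k : ℕ} (rel : Fin k → Word n) (p : Word n) : Prop :=
  p ≠ [] ∧ Reduced p ∧ ∃ x ∈ symClosure rel, ∃ y ∈ symClosure rel,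
    x ≠ y ∧ p <+: x ∧ p <+: y

/-- The `C(N)` small-cancellation condition: no element of the symmetrised closure
is the concatenation (without cancellation) of fewer than `N` pieces. -/
def SatC {n k : ℕ} (rel : Fin k → Word n) (N : ℕ) : Prop :=
  ∀ r ∈ symClosure rel, ∀ L : List (Word n),
    (∀ p ∈ L, IsPiece rel p) → r = L.flatten → N ≤ L.length

/-- The `T(q)` small-cancellation condition. -/
def SatT {n k : ℕ} (rel : Fin k → Word n) (q : ℕ) : Prop :=
  ∀ h : ℕ, 3 ≤ h → h < q →
    ¬∃ x : ℕ → Word n,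
      (∀ i < h, x i ∈ symClosure rel) ∧
      (∀ i < h, FreeGroup.mk (x i) * FreeGroup.mk (x ((i + 1) % h)) ≠ 1) ∧
      (∀ i < h, ¬ Reduced (x i ++ x ((i + 1) % h)))

/-- The metric `C'(lam)` small-cancellation condition. -/
def SatC' {n k : ℕ} (rel : Fin k → Word n) (lam : ℚ) : Prop :=
  ∀ r ∈ symClosure rel, ∀ p : Word n, IsPiece rel p → p <+: r →
    (p.length : ℚ) < lam * r.length

/-- The normal closure of the relators in the free group. -/
def relNC {n k : ℕ} (rel : Fin k → Word n) : Subgroup (FreeGroup (Fin n)) :=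
  Subgroup.normalClosure (Set.range fun i => FreeGroup.mk (rel i))

instance {n k : ℕ} (rel : Fin k → Word n) : (relNC rel).Normal :=
  Subgroup.normalClosure_normal

/-- `T` is a full left transversal for the subgroup `H`: every left coset of `H`
contains exactly one element of `T`. -/
def IsLeftTransversal {F : Type*} [Group F] (T : Set F) (H : Subgroup F) : Prop :=
  ∀ g : F, ∃! t : F, t ∈ T ∧ g⁻¹ * t ∈ H

/-- The conjugate `t⟨r_i⟩t⁻¹` of the cyclic subgroup generated by the `i`-th relator. -/
def conjCyc {n k : ℕ} (rel : Fin k → Word n) (i : Fin k) (t : FreeGroup (Fin n)) :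
    Subgroup (FreeGroup (Fin n)) :=
  Subgroup.zpowers (t * FreeGroup.mk (rel i) * t⁻¹)


/-- The word `w_K = t a^K t⁻¹ b^(K+4)` over the alphabet `{a, b, t} = {0, 1, 2}`. -/
def wK (K : ℕ) : Word 3 :=
  [((2 : Fin 3), true)] ++ List.replicate K ((0 : Fin 3), true) ++
    [((2 : Fin 3), false)] ++ List.replicate (K + 4) ((1 : Fin 3), true)

/-!
A piece of `w_K` is a common prefix of two distinct rotations of words
`t a^(±K) t⁻¹ b^(±(K+4))`. If the two signs agree, the piece contains no `t^(±1)`, whose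
position would pin both rotations, so it is a proper subword of the block `a^K` or `b^(K+4)`.
If the signs differ, the first letter must be `t^(±1)` (the only letters the two words share)
and the next letters are already `a` or `b` with opposite exponents, so the piece is a single
`t^(±1)`. Thus every piece is a power of one letter, shorter than the number of occurrences of
that generator in the relator, and each of `a`, `b`, `t` needs at least two pieces of its own:
six in all.
-/

theorem two_le_countP_pos_of_forall_lt_sum {s : List ℕ} (hpos : 0 < s.sum)
    (hlt : ∀ x ∈ s, x < s.sum) : 2 ≤ s.countP (0 < ·) := by
  obtain ⟨x, hx, hx0⟩ : ∃ x ∈ s, 0 < x := by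
    contrapose! hpos
    simp [List.sum_eq_zero fun x hx => Nat.le_zero.mp (hpos x hx)]
  have hsum (l : List ℕ) (hl : l.countP (0 < ·) = 0) : l.sum = 0 :=
    List.sum_eq_zero fun x hx => by simpa using List.countP_eq_zero.mp hl x hx
  obtain ⟨l₁, l₂, rfl⟩ := List.append_of_mem hx
  by_contra! h
  rw [List.countP_append, List.countP_cons_of_pos (by simpa using hx0)] at h
  have h₁ : l₁.sum = 0 := hsum l₁ (by omega)
  have h₂ : l₂.sum = 0 := hsum l₂ (by omega)
  have := hlt x hx
  simp [h₁, h₂] at this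

theorem sum_countP_le_length {γ ι : Type*} (L : List γ) (S : Finset ι) (P : ι → γ → Bool)
    (h : ∀ c ∈ L, ∀ i ∈ S, ∀ j ∈ S, P i c → P j c → i = j) :
    ∑ i ∈ S, L.countP (P i) ≤ L.length := by
  induction L with
  | nil => simp
  | cons c L ih =>
    have hc : (S.filter (P · c)).card ≤ 1 :=
      Finset.card_le_one.mpr fun i hi j hj =>
        h c (by simp) i (Finset.mem_filter.mp hi).1 j (Finset.mem_filter.mp hj).1
          (Finset.mem_filter.mp hi).2 (Finset.mem_filter.mp hj).2
    simp only [List.countP_cons, Finset.sum_add_distrib, List.length_cons]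
    rw [Finset.card_filter] at hc
    have := ih fun c' hc' => h c' (List.mem_cons_of_mem _ hc')
    omega

theorem two_mul_card_le_length_of_forall_eq_replicate {α β : Type*} [DecidableEq β] (f : α → β)
    {L : List (List α)}
    (hL : ∀ p ∈ L, ∃ x n, p = .replicate n x ∧ n < L.flatten.countP (f · = f x)) :
    2 * (L.flatten.map f).toFinset.card ≤ L.length := by
  set S := (L.flatten.map f).toFinset
  have countP_replicate {i x n} :
      (List.replicate n x).countP (f · = i) = if f x = i then n else 0 := by
    simp [List.countP_replicate]
  calc 2 * S.card = ∑ _i ∈ S, 2 := by simp [mul_comm]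
    _ ≤ ∑ i ∈ S, L.countP fun p => 0 < p.countP (f · = i) := by
      refine Finset.sum_le_sum fun i hi => ?_
      have hpos : 0 < L.flatten.countP (f · = i) := by
        obtain ⟨a, ha, rfl⟩ := List.mem_map.mp (List.mem_toFinset.mp hi)
        exact List.countP_pos_iff.mpr ⟨a, ha, by simp⟩
      rw [List.countP_flatten] at hpos
      have := two_le_countP_pos_of_forall_lt_sum hpos fun _ hs => by
        obtain ⟨p, hp, rfl⟩ := List.mem_map.mp hs
        obtain ⟨x, n, rfl, hn⟩ := hL p hp
        rw [countP_replicate, ← List.countP_flatten]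
        split_ifs with hx
        · rwa [← hx]
        · rwa [List.countP_flatten]
      rwa [List.countP_map] at this
    _ ≤ L.length := sum_countP_le_length L S _ fun p hp i _ j _ hi hj => by
      obtain ⟨x, n, rfl, -⟩ := hL p hp
      simp only [countP_replicate, decide_eq_true_eq] at hi hj
      split_ifs at hi hj with hxi hxj <;> first | omega | exact hxi.symm.trans hxj

/-- `e` is the sign of the exponents of `a` and `b`; by `wordInv_wK` every element of the
symmetrised closure of `wK K` is a rotation of some `relWord K e`. -/
def relWord (K : ℕ) (e : Bool) : Word 3 :=
  [(2, true)] ++ List.replicate K (0, e) ++ [(2, false)] ++ List.replicate (K + 4) (1, e)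

def relLetter (K : ℕ) (e : Bool) (i : ℕ) : Fin 3 × Bool :=
  if i = 0 then (2, true) else if i ≤ K then (0, e) else if i = K + 1 then (2, false) else (1, e)

section relWord

variable {K : ℕ} {e e' : Bool} {i j l m m' : ℕ} {p : Word 3}

lemma length_relWord : (relWord K e).length = 2 * K + 6 := by
  simp only [relWord, List.length_append, List.length_replicate, List.length_cons,
    List.length_nil]
  omega

lemma getElem_relWord (h : i < (relWord K e).length) : (relWord K e)[i] = relLetter K e i := by
  simp only [relWord, relLetter, List.getElem_append, List.length_append, List.length_replicate,
    List.length_cons, List.length_nil, List.getElem_replicate]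
  split_ifs <;> first | rfl | omega | simp_all [List.getElem_cons]

lemma relLetter_of_pos_of_le (h₁ : 0 < i) (h₂ : i ≤ K) : relLetter K e i = (0, e) := by
  rw [relLetter, if_neg h₁.ne', if_pos h₂]

lemma relLetter_of_succ_lt (h : K + 1 < i) : relLetter K e i = (1, e) := by
  rw [relLetter, if_neg (by omega), if_neg (by omega), if_neg (by omega)]

lemma relLetter_fst_eq_two_iff : (relLetter K e i).1 = 2 ↔ i = 0 ∨ i = K + 1 := by
  unfold relLetter; split_ifs <;> simp <;> omega

lemma eq_of_relLetter_eq (h : relLetter K e i = relLetter K e' j) (ht : (relLetter K e i).1 = 2) :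
    i = j := by
  unfold relLetter at h ht; split_ifs at h ht <;> simp_all

lemma relLetter_fst_eq_two_of_eq (hee : e ≠ e') (h : relLetter K e i = relLetter K e' j) :
    (relLetter K e i).1 = 2 := by
  unfold relLetter at h ⊢; split_ifs at h ⊢ <;> simp_all

lemma getElem_of_prefix_rotate (h : p <+: (relWord K e).rotate m) (hj : j < p.length) :
    p[j] = relLetter K e ((j + m) % (2 * K + 6)) := by
  rw [h.getElem hj, List.getElem_rotate, getElem_relWord, length_relWord]

lemma eq_of_prefix_rotate_of_fst_eq_two (hm : m < 2 * K + 6) (hm' : m' < 2 * K + 6)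
    (h : p <+: (relWord K e).rotate m) (h' : p <+: (relWord K e).rotate m')
    {x : Fin 3 × Bool} (hx : x ∈ p) (ht : x.1 = 2) : m = m' := by
  obtain ⟨j, hj, rfl⟩ := List.mem_iff_getElem.mp hx
  rw [getElem_of_prefix_rotate h] at ht
  have hmod : j + m ≡ j + m' [MOD 2 * K + 6] :=
    eq_of_relLetter_eq ((getElem_of_prefix_rotate h hj).symm.trans
      (getElem_of_prefix_rotate h' hj)) ht
  simpa [Nat.ModEq, Nat.mod_eq_of_lt hm, Nat.mod_eq_of_lt hm'] using
    Nat.ModEq.add_left_cancel' j hmod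

lemma block_of_forall_mod_ne (hm : m < 2 * K + 6) (hl : 0 < l)
    (h : ∀ j < l, (j + m) % (2 * K + 6) ≠ 0 ∧ (j + m) % (2 * K + 6) ≠ K + 1) :
    (0 < m ∧ m + l ≤ K + 1) ∨ (K + 1 < m ∧ m + l ≤ 2 * K + 6) := by
  have h₀ := h 0 hl
  rw [zero_add, Nat.mod_eq_of_lt hm] at h₀
  by_cases hmK : m ≤ K
  · refine .inl ⟨by omega, not_lt.mp fun hlt => (h (K + 1 - m) (by omega)).2 ?_⟩
    rw [Nat.sub_add_cancel (by omega), Nat.mod_eq_of_lt (by omega)]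
  · refine .inr ⟨by omega, not_lt.mp fun hlt => (h (2 * K + 6 - m) (by omega)).1 ?_⟩
    rw [Nat.sub_add_cancel hm.le, Nat.mod_self]

lemma eq_replicate_of_prefix_rotate_of_forall_fst_ne_two (hm : m < 2 * K + 6)
    (h : p <+: (relWord K e).rotate m) (hne : p ≠ []) (ht : ∀ x ∈ p, x.1 ≠ 2) :
    (0 < m ∧ m + p.length ≤ K + 1 ∧ p = .replicate p.length (0, e)) ∨
      (K + 1 < m ∧ m + p.length ≤ 2 * K + 6 ∧ p = .replicate p.length (1, e)) := by
  have hblock := block_of_forall_mod_ne hm (List.length_pos_iff.mpr hne) fun j hj => by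
    have := ht _ (List.getElem_mem hj)
    rw [getElem_of_prefix_rotate h, ne_eq, relLetter_fst_eq_two_iff] at this
    omega
  have hp {x : Fin 3 × Bool} (hx : ∀ j (hj : j < p.length), relLetter K e (j + m) = x) :
      p = .replicate p.length x := by
    refine List.eq_replicate_iff.mpr ⟨rfl, fun y hy => ?_⟩
    obtain ⟨j, hj, rfl⟩ := List.mem_iff_getElem.mp hy
    rw [getElem_of_prefix_rotate h, Nat.mod_eq_of_lt (by omega), hx j hj]
  rcases hblock with ⟨hm₀, hmK⟩ | ⟨hmK, hmN⟩
  · exact .inl ⟨hm₀, hmK, hp fun j hj => relLetter_of_pos_of_le (by omega) (by omega)⟩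
  · exact .inr ⟨hmK, hmN, hp fun j hj => relLetter_of_succ_lt (by omega)⟩

lemma exists_eq_replicate_of_prefix_rotate_of_ne (hm : m < 2 * K + 6) (hm' : m' < 2 * K + 6)
    (hmm : m ≠ m') (h : p <+: (relWord K e).rotate m) (h' : p <+: (relWord K e).rotate m')
    (hne : p ≠ []) :
    (∃ n < K, p = .replicate n (0, e)) ∨ (∃ n < K + 4, p = .replicate n (1, e)) := by
  have ht (x) (hx : x ∈ p) : x.1 ≠ 2 := fun ht =>
    hmm (eq_of_prefix_rotate_of_fst_eq_two hm hm' h h' hx ht)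
  have hpos := List.length_pos_iff.mpr hne
  have hab : List.replicate p.length ((0 : Fin 3), e) ≠ .replicate p.length (1, e) := by
    simp [List.replicate_inj, hpos.ne']
  rcases eq_replicate_of_prefix_rotate_of_forall_fst_ne_two hm h hne ht with
      ⟨hm₀, hmK, ha⟩ | ⟨hmK, hmN, hb⟩ <;>
    rcases eq_replicate_of_prefix_rotate_of_forall_fst_ne_two hm' h' hne ht with
      ⟨hm₀', hmK', ha'⟩ | ⟨hmK', hmN', hb'⟩
  · exact .inl ⟨p.length, by omega, ha⟩
  · exact absurd (ha.symm.trans hb') hab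
  · exact absurd (ha'.symm.trans hb) hab
  · exact .inr ⟨p.length, by omega, hb⟩

lemma eq_singleton_of_prefix_rotate_of_ne (hK : 0 < K) (hee : e ≠ e') (hm : m < 2 * K + 6)
    (hm' : m' < 2 * K + 6) (h : p <+: (relWord K e).rotate m)
    (h' : p <+: (relWord K e').rotate m') (hne : p ≠ []) :
    ∃ b, p = [(2, b)] := by
  have hpos := List.length_pos_iff.mpr hne
  have h₀ := (getElem_of_prefix_rotate h hpos).symm.trans (getElem_of_prefix_rotate h' hpos)
  simp only [zero_add, Nat.mod_eq_of_lt hm, Nat.mod_eq_of_lt hm'] at h₀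
  have ht := relLetter_fst_eq_two_of_eq hee h₀
  obtain rfl := eq_of_relLetter_eq h₀ ht
  have hm₀ := relLetter_fst_eq_two_iff.mp ht
  obtain ⟨x, rfl⟩ : ∃ x, p = [x] := by
    refine List.length_eq_one_iff.mp (le_antisymm (not_lt.mp fun h₂ => ?_) hpos)
    have h₁ := (getElem_of_prefix_rotate h h₂).symm.trans (getElem_of_prefix_rotate h' h₂)
    have := relLetter_fst_eq_two_iff.mp (relLetter_fst_eq_two_of_eq hee h₁)
    rw [Nat.mod_eq_of_lt (by omega)] at this
    omega
  have hx : x = relLetter K e m := by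
    simpa [Nat.mod_eq_of_lt hm] using getElem_of_prefix_rotate h (j := 0) (by simp)
  exact ⟨x.2, by rw [hx, ← ht]⟩

end relWord

lemma wordInv_wK (K : ℕ) : wordInv (wK K) = (relWord K false).rotate (K + 2) := by
  have hsplit : relWord K false =
      ([(2, true)] ++ .replicate K (0, false) ++ [(2, false)]) ++ .replicate (K + 4) (1, false) :=
    rfl
  have hlen :
      ([((2 : Fin 3), true)] ++ List.replicate K (0, false) ++ [(2, false)]).length = K + 2 := by
    simp
  rw [hsplit, ← hlen, List.rotate_append_length_eq]
  simp [wordInv, wK]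

lemma exists_rotate_of_mem_symClosure {K : ℕ} {x : Word 3}
    (hx : x ∈ symClosure fun _ : Fin 1 => wK K) :
    ∃ e, ∃ m < 2 * K + 6, x = (relWord K e).rotate m := by
  obtain ⟨-, m, rfl | rfl⟩ := hx
  · exact ⟨true, m % (2 * K + 6), Nat.mod_lt _ (by omega), by
      rw [← length_relWord (e := true), List.rotate_mod]; rfl⟩
  · exact ⟨false, (K + 2 + m) % (2 * K + 6), Nat.mod_lt _ (by omega), by
      rw [wordInv_wK, List.rotate_rotate, ← length_relWord (e := false), List.rotate_mod]⟩

lemma countP_fst_relWord (K : ℕ) (e : Bool) (i : Fin 3) :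
    (relWord K e).countP (·.1 = i) = (wK K).countP (·.1 = i) := by
  simp only [relWord, wK, List.countP_append, List.countP_cons, List.countP_nil,
    List.countP_replicate]

lemma countP_fst_of_mem_symClosure {K : ℕ} {x : Word 3}
    (hx : x ∈ symClosure fun _ : Fin 1 => wK K) (i : Fin 3) :
    x.countP (·.1 = i) = (wK K).countP (·.1 = i) := by
  obtain ⟨e, m, -, rfl⟩ := exists_rotate_of_mem_symClosure hx
  rw [(List.rotate_perm _ m).countP_eq, countP_fst_relWord]

lemma countP_fst_wK_pos {K : ℕ} (hK : 0 < K) (i : Fin 3) : 0 < (wK K).countP (·.1 = i) := by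
  fin_cases i <;> simp [wK, List.countP_replicate, hK]

lemma IsPiece.exists_eq_replicate {K : ℕ} (hK : 0 < K) {p : Word 3}
    (hp : IsPiece (fun _ : Fin 1 => wK K) p) :
    ∃ x n, p = .replicate n x ∧ n < (wK K).countP (·.1 = x.1) := by
  obtain ⟨hne, -, x, hx, y, hy, hxy, hpx, hpy⟩ := hp
  obtain ⟨e, m, hm, rfl⟩ := exists_rotate_of_mem_symClosure hx
  obtain ⟨e', m', hm', rfl⟩ := exists_rotate_of_mem_symClosure hy
  by_cases hee : e = e'
  · subst hee
    have hmm : m ≠ m' := by rintro rfl; exact hxy rfl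
    rcases exists_eq_replicate_of_prefix_rotate_of_ne hm hm' hmm hpx hpy hne with
      ⟨n, hn, rfl⟩ | ⟨n, hn, rfl⟩
    · exact ⟨(0, e), n, rfl, by simpa [wK, List.countP_replicate] using hn⟩
    · exact ⟨(1, e), n, rfl, by simpa [wK, List.countP_replicate] using hn⟩
  · obtain ⟨b, rfl⟩ := eq_singleton_of_prefix_rotate_of_ne hK hee hm hm' hpx hpy hne
    exact ⟨(2, b), 1, rfl, by simp [wK, List.countP_replicate]⟩

theorem wK_satisfies_C6 (K : ℕ) (hK : 3 ≤ K) :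
    SatC (fun _ : Fin 1 => wK K) 6 := by
  rintro r hr L hL rfl
  have hgen : (L.flatten.map Prod.fst).toFinset = Finset.univ := by
    refine Finset.eq_univ_of_forall fun i => List.mem_toFinset.mpr ?_
    have hpos : 0 < L.flatten.countP (·.1 = i) := by
      rw [countP_fst_of_mem_symClosure hr]
      exact countP_fst_wK_pos (by omega) i
    obtain ⟨x, hx, hxi⟩ := List.countP_pos_iff.mp hpos
    exact List.mem_map.mpr ⟨x, hx, by simpa using hxi⟩
  calc 6 = 2 * (L.flatten.map Prod.fst).toFinset.card := by rw [hgen]; rfl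
    _ ≤ L.length := two_mul_card_le_length_of_forall_eq_replicate Prod.fst fun p hp => by
      obtain ⟨x, n, rfl, hn⟩ := (hL p hp).exists_eq_replicate (by omega)
      exact ⟨x, n, rfl, (countP_fst_of_mem_symClosure hr x.1).symm ▸ hn⟩

end CL
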